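/- Let λ > 0 and let (S₀, 0, P₀) be a point of the family Σ, i.e. S₀² + P₀²/2 = 1/3. Then the characteristic polynomial of the 3×3 Jacobian matrix of the reduced vector field F at (S₀, 0, P₀) is X·(X − (1 − (λ/2)P₀))·(X − (2/3)(2 + √3 S₀)); i.e., the linearization has eigenvalues ε₁ = 0, ε₂ = 1 − (λ/2)P₀, and ε₃ = (2/3)(2 + √3 S₀). -/

import Mathlib

/-- The reduced vector field `F : ℝ³ → ℝ³` in the variables `(S, U, P)`. -/
noncomputable def Fvec (lam : ℝ) (x : Fin 3 → ℝ) : Fin 3 → ℝ :=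
  ![-1 / (3 * Real.sqrt 3) - (2 / 3) * x 0 + x 0 ^ 2 / Real.sqrt 3
      + x 1 ^ 2 / Real.sqrt 3 + x 2 ^ 2 / (2 * Real.sqrt 3)
      + 2 * x 0 ^ 3 - x 0 * x 1 ^ 2 + x 0 * x 2 ^ 2,
    x 1 * (1 / 3 - (lam / 2) * x 2 + 2 * x 0 ^ 2 - x 1 ^ 2 + x 2 ^ 2),
    -(2 / 3) * x 2 + lam * x 1 ^ 2 + 2 * x 0 ^ 2 * x 2 - x 1 ^ 2 * x 2
      + x 2 ^ 3]

/-- The Jacobian matrix of `F` at `x`: entry `(i, j)` is the partial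
derivative of the `i`-th component with respect to the `j`-th variable. -/
noncomputable def jac (lam : ℝ) (x : Fin 3 → ℝ) : Matrix (Fin 3) (Fin 3) ℝ :=
  Matrix.of fun i j => deriv (fun s => Fvec lam (Function.update x j s) i) (x j)

/-! On the invariant plane `U = 0` the Jacobian does not couple `U` to `(S, P)`, so its
characteristic polynomial splits off the factor `X - ∂F₂/∂U`, and `∂F₂/∂U = 1 - (λ/2)P₀` on `Σ`.
The remaining `2 × 2` block in `(S, P)` is singular on `Σ`, since the tangent of a curve of
equilibria lies in the kernel of the linearization; its trace is `(2/3)(2 + √3 S₀)`. -/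

set_option linter.unusedSimpArgs false in
theorem jac_eq (lam : ℝ) (x : Fin 3 → ℝ) :
    jac lam x =
      !![-2 / 3 + 2 * x 0 / √3 + 6 * x 0 ^ 2 - x 1 ^ 2 + x 2 ^ 2, 2 * x 1 / √3 - 2 * x 0 * x 1,
          x 2 / √3 + 2 * x 0 * x 2;
        4 * x 0 * x 1, 1 / 3 - lam / 2 * x 2 + 2 * x 0 ^ 2 - 3 * x 1 ^ 2 + x 2 ^ 2,
          x 1 * (2 * x 2 - lam / 2);
        4 * x 0 * x 2, 2 * lam * x 1 - 2 * x 1 * x 2, -2 / 3 + 2 * x 0 ^ 2 - x 1 ^ 2 + 3 * x 2 ^ 2] := by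
  ext i j
  fin_cases i <;> fin_cases j <;>
    simp (disch := fun_prop) [jac, Fvec, Function.update_apply, deriv_add, deriv_sub, deriv_neg'',
      deriv_mul, deriv_div_const, -mul_eq_mul_left_iff, -mul_eq_mul_right_iff] <;> ring

theorem jac_at_U_eq_zero (lam S P : ℝ) :
    jac lam ![S, 0, P] =
      !![-2 / 3 + 2 * S / √3 + 6 * S ^ 2 + P ^ 2, 0, P / √3 + 2 * S * P;
        0, 1 / 3 - lam / 2 * P + 2 * S ^ 2 + P ^ 2, 0;
        4 * S * P, 0, -2 / 3 + 2 * S ^ 2 + 3 * P ^ 2] := by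
  rw [jac_eq]
  ext i j
  fin_cases i <;> fin_cases j <;> simp

open Polynomial in
theorem Matrix.charpoly_fin_three_of_decoupled_middle {R : Type*} [CommRing R] (a b c d e : R) :
    (!![a, 0, b; 0, e, 0; c, 0, d]).charpoly
      = (X - C e) * (X ^ 2 - C (a + d) * X + C (a * d - b * c)) := by
  simp [Matrix.charpoly, Matrix.det_fin_three]
  ring

open Polynomial in
theorem charpoly_on_Sigma_general (lam : ℝ) (S₀ P₀ : ℝ)
    (hSigma : S₀ ^ 2 + P₀ ^ 2 / 2 = 1 / 3) :
    (jac lam ![S₀, 0, P₀]).charpoly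
      = X * (X - C (1 - (lam / 2) * P₀))
          * (X - C ((2 / 3) * (2 + Real.sqrt 3 * S₀))) := by
  have hP : P₀ ^ 2 = 2 / 3 - 2 * S₀ ^ 2 := by linear_combination 2 * hSigma
  have hmiddle : 1 / 3 - lam / 2 * P₀ + 2 * S₀ ^ 2 + P₀ ^ 2 = 1 - lam / 2 * P₀ := by
    linear_combination hP
  have htrace : (-2 / 3 + 2 * S₀ / √3 + 6 * S₀ ^ 2 + P₀ ^ 2) + (-2 / 3 + 2 * S₀ ^ 2 + 3 * P₀ ^ 2)
      = 2 / 3 * (2 + √3 * S₀) := by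
    have h3 : √3 * √3 = 3 := Real.mul_self_sqrt (by norm_num)
    field_simp
    linear_combination 12 * √3 * hP - 2 * S₀ * h3
  have hdet : (-2 / 3 + 2 * S₀ / √3 + 6 * S₀ ^ 2 + P₀ ^ 2) * (-2 / 3 + 2 * S₀ ^ 2 + 3 * P₀ ^ 2)
      - (P₀ / √3 + 2 * S₀ * P₀) * (4 * S₀ * P₀) = 0 := by
    linear_combination (3 * P₀ ^ 2 + 6 * S₀ ^ 2 + 2 * S₀ / √3 - 2 / 3) * hP
  rw [jac_at_U_eq_zero, Matrix.charpoly_fin_three_of_decoupled_middle, hmiddle, htrace, hdet,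
    map_zero]
  ring

open Polynomial in
/-- For `λ > 0` and a point `(S₀, 0, P₀)` of the family `Σ`
(i.e. `S₀² + P₀²/2 = 1/3`), the characteristic polynomial of the Jacobian of
the reduced vector field there is
`X·(X − (1 − (λ/2)P₀))·(X − (2/3)(2 + √3 S₀))`; i.e. the linearization has
eigenvalues `ε₁ = 0`, `ε₂ = 1 − (λ/2)P₀` and `ε₃ = (2/3)(2 + √3 S₀)`. -/
theorem charpoly_on_Sigma (lam : ℝ) (hlam : 0 < lam) (S₀ P₀ : ℝ)
    (hSigma : S₀ ^ 2 + P₀ ^ 2 / 2 = 1 / 3) :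
    (jac lam ![S₀, 0, P₀]).charpoly
      = X * (X - C (1 - (lam / 2) * P₀))
          * (X - C ((2 / 3) * (2 + Real.sqrt 3 * S₀))) :=
  charpoly_on_Sigma_general lam S₀ P₀ hSigma
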